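/- Let σ, ρ > 0 and N ≥ 1. Let b_k = N!/(k!((N-k)/2)!) · ((ρ+σ)/(2σ(2ρ+σ)))^{(N-k)/2} if N-k is even and b_k = 0 if N-k is odd, for k = 0,…,N-1, and set b_N = 1. Then Σ_{m=0}^{N} A_{j,m} b_m = 0 for every j = 0,…,N-1. -/

import Mathlib

open Real MeasureTheory Finset Nat

/-- Physicist's Hermite polynomial via the Rodrigues formula. -/
noncomputable def hermiteH (n : ℕ) (t : ℝ) : ℝ :=
  (-1 : ℝ) ^ n * Real.exp (t ^ 2) * iteratedDeriv n (fun s => Real.exp (-s ^ 2)) t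

/-- `A_{j,m} = c √(2ρ) (-1)^{j+m} (2σ)^{-(j+m)/2} ∫ H_j(cτ) H_m(cτ) e^{-τ²} dτ`
with `c = (2+σ/ρ)^{-1/2}`. -/
noncomputable def Acoef (σ ρ : ℝ) (j m : ℕ) : ℝ :=
  (2 + σ / ρ) ^ (-(1 : ℝ) / 2) * Real.sqrt (2 * ρ) * (-1 : ℝ) ^ (j + m) *
    (2 * σ) ^ (-((j : ℝ) + m) / 2) *
    ∫ τ : ℝ, hermiteH j ((2 + σ / ρ) ^ (-(1 : ℝ) / 2) * τ) *
        hermiteH m ((2 + σ / ρ) ^ (-(1 : ℝ) / 2) * τ) * Real.exp (-τ ^ 2)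

/-- The explicit coefficients `b_k` (for `k < N`), with `b_N = 1` handled separately. -/
noncomputable def bcoef (σ ρ : ℝ) (N k : ℕ) : ℝ :=
  if (N - k) % 2 = 0 then
    (N ! : ℝ) / ((k ! : ℝ) * (((N - k) / 2)! : ℝ)) *
      ((ρ + σ) / (2 * σ * (2 * ρ + σ))) ^ ((N - k) / 2)
  else 0

open Polynomial

/-- Physicist's Hermite polynomials as actual polynomials. -/
noncomputable def PH : ℕ → Polynomial ℝ
  | 0 => 1
  | (n+1) => C 2 * X * PH n - derivative (PH n)

lemma PH_zero : PH 0 = 1 := rfl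
lemma PH_succ (n : ℕ) : PH (n+1) = C 2 * X * PH n - derivative (PH n) := rfl
lemma PH_one : PH 1 = C 2 * X := by simp [PH_succ, PH_zero]

lemma derivative_PH (n : ℕ) : derivative (PH (n+1)) = C (2*(n+1) : ℝ) * PH n := by
  induction n using Nat.strong_induction_on with
  | _ n ih =>
    match n with
    | 0 =>
      apply Polynomial.funext; intro x
      simp [PH_succ, PH_zero]
    | 1 =>
      apply Polynomial.funext; intro x
      simp [PH_succ, PH_zero, PH_one]
      ring
    | (m+2) =>
      rw [PH_succ (m+2)]
      simp only [derivative_sub, derivative_mul, derivative_C, derivative_X]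
      rw [ih (m+1) (by omega)]
      simp only [derivative_mul, derivative_C]
      rw [ih m (by omega), PH_succ (m+1), ih m (by omega)]
      apply Polynomial.funext; intro x
      simp only [eval_add, eval_sub, eval_mul, eval_pow, eval_C, eval_X, eval_one, eval_neg, eval_zero]
      push_cast
      ring

lemma PH_rec (n : ℕ) : PH (n+2) = C 2 * X * PH (n+1) - C (2*(n+1) : ℝ) * PH n := by
  rw [PH_succ (n+1), derivative_PH]

lemma X_mul_PH (m : ℕ) (x : ℝ) :
    2 * x * (PH m).eval x = (PH (m+1)).eval x + 2*m*(PH (m-1)).eval x := by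
  cases m with
  | zero => simp [PH_one, PH_zero]
  | succ k =>
    have := congrArg (Polynomial.eval x) (PH_rec k)
    simp only [eval_sub, eval_mul, eval_C, eval_X] at this
    rw [this]
    push_cast
    ring

lemma natDegree_PH (n : ℕ) : (PH n).natDegree ≤ n := by
  induction n with
  | zero => simp [PH_zero]
  | succ k ih =>
    rw [PH_succ]
    refine le_trans (natDegree_sub_le _ _) ?_
    simp only [sup_le_iff]
    constructor
    · refine le_trans (natDegree_mul_le) ?_
      have : (C (2:ℝ) * X).natDegree ≤ 1 := by
        refine le_trans (natDegree_mul_le) ?_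
        simp
      omega
    · have := Polynomial.natDegree_derivative_le (PH k)
      omega

/-- Derivative of `PH n · gaussian`. -/
lemma hasDerivAt_PH_gauss (n : ℕ) (x : ℝ) :
    HasDerivAt (fun y => (PH n).eval y * Real.exp (-y^2))
      (-((PH (n+1)).eval x * Real.exp (-x^2))) x := by
  have h1 : HasDerivAt (fun y : ℝ => (PH n).eval y) ((derivative (PH n)).eval x) x :=
    (PH n).hasDerivAt x
  have h2 : HasDerivAt (fun y : ℝ => Real.exp (-y^2)) (-2*x * Real.exp (-x^2)) x := by
    have hx : HasDerivAt (fun y : ℝ => -y^2) (-2*x) x := by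
      exact (hasDerivAt_pow 2 x).neg.congr_deriv (by norm_num)
    simpa [mul_comm] using hx.exp
  have := h1.mul h2
  refine this.congr_deriv ?_
  rw [PH_succ]
  simp only [eval_sub, eval_mul, eval_C, eval_X]
  ring

lemma iteratedDeriv_gauss (n : ℕ) (x : ℝ) :
    iteratedDeriv n (fun s => Real.exp (-s^2)) x = (-1:ℝ)^n * (PH n).eval x * Real.exp (-x^2) := by
  induction n generalizing x with
  | zero => simp [PH]
  | succ k ih =>
    rw [iteratedDeriv_succ]
    have hfun : iteratedDeriv k (fun s => Real.exp (-s^2))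
        = fun y => (-1:ℝ)^k * ((PH k).eval y * Real.exp (-y^2)) := by
      funext y; rw [ih]; ring
    rw [hfun]
    have := ((hasDerivAt_PH_gauss k x).const_mul ((-1:ℝ)^k)).deriv
    rw [this]
    ring

lemma hermiteH_eq_PH (n : ℕ) (t : ℝ) :
    (-1 : ℝ) ^ n * Real.exp (t ^ 2) * iteratedDeriv n (fun s => Real.exp (-s ^ 2)) t
      = (PH n).eval t := by
  have : (fun s : ℝ => Real.exp (-s ^ 2)) = fun s : ℝ => Real.exp (-s^2) := by norm_num
  rw [this, iteratedDeriv_gauss]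
  rw [show (-1:ℝ)^n * Real.exp (t^2) * ((-1:ℝ)^n * (PH n).eval t * Real.exp (-t^2))
      = ((-1:ℝ)^n)^2 * (PH n).eval t * (Real.exp (t^2) * Real.exp (-t^2)) by ring]
  rw [← Real.exp_add]
  simp [← pow_mul, pow_mul']

/-- Monomials times gaussian are integrable. -/
lemma integrable_pow_gauss (i : ℕ) : Integrable (fun x : ℝ => x^i * Real.exp (-x^2)) := by
  have key : ∀ x : ℝ, ‖x^i * Real.exp (-(1/2) * x^2)‖ ≤ 1 + 2^i * i ! := by
    intro x
    have h1 : ‖x^i * Real.exp (-(1/2) * x^2)‖ = |x|^i * Real.exp (-(1/2)*x^2) := by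
      rw [norm_mul, Real.norm_eq_abs, Real.norm_eq_abs, abs_pow, Real.abs_exp]
    rw [h1]
    have hy : (0:ℝ) ≤ (1/2) * x^2 := by positivity
    have hpow : ((1/2:ℝ) * x^2)^i ≤ i ! * Real.exp ((1/2)*x^2) := by
      have hs := Real.sum_le_exp_of_nonneg hy (i+1)
      have hterm : ((1/2:ℝ)*x^2)^i / i ! ≤ ∑ k ∈ Finset.range (i+1), ((1/2:ℝ)*x^2)^k / k ! := by
        refine Finset.single_le_sum (f := fun k => ((1/2:ℝ)*x^2)^k / k !) ?_ (by simp)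
        intro k _; positivity
      have hfac : (0:ℝ) < i ! := by positivity
      have h := le_trans hterm hs
      rw [div_le_iff₀ hfac] at h
      linarith
    have hfac2 : (0:ℝ) < (i ! : ℕ) := by positivity
    have habs : |x|^i ≤ 1 + 2^i * i ! * Real.exp ((1/2)*x^2) := by
      rcases le_or_gt (|x|) 1 with h | h
      · have : |x|^i ≤ 1 := pow_le_one₀ (abs_nonneg x) h
        nlinarith [mul_pos (mul_pos (pow_pos (show (0:ℝ)<2 by norm_num) i) hfac2) (Real.exp_pos ((1/2)*x^2))]
      · have h2 : |x|^i ≤ |x|^(2*i) := pow_le_pow_right₀ h.le (by omega)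
        have h3 : |x|^(2*i) = (x^2)^i := by
          rw [pow_mul, sq_abs]
        have h4 : (x^2)^i = 2^i * ((1/2:ℝ)*x^2)^i := by
          rw [mul_pow, ← mul_assoc, ← mul_pow]
          norm_num
        nlinarith [pow_pos (show (0:ℝ)<2 by norm_num) i]
    have hexp := Real.exp_pos (-(1/2)*x^2)
    have hee : Real.exp ((1/2)*x^2) * Real.exp (-(1/2)*x^2) = 1 := by
      rw [← Real.exp_add]; norm_num
    have hle : Real.exp (-(1/2)*x^2) ≤ 1 := by
      rw [Real.exp_le_one_iff]; nlinarith
    calc |x|^i * Real.exp (-(1/2)*x^2)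
        ≤ (1 + 2^i * i ! * Real.exp ((1/2)*x^2)) * Real.exp (-(1/2)*x^2) := by
          apply mul_le_mul_of_nonneg_right habs hexp.le
      _ = Real.exp (-(1/2)*x^2) + 2^i * i ! * (Real.exp ((1/2)*x^2) * Real.exp (-(1/2)*x^2)) := by
          ring
      _ = Real.exp (-(1/2)*x^2) + 2^i * i ! := by rw [hee]; ring
      _ ≤ 1 + 2^i * i ! := by linarith
  have hint : Integrable (fun x : ℝ => Real.exp (-(1/2) * x^2)) :=
    integrable_exp_neg_mul_sq (by norm_num)
  have hmeas : AEStronglyMeasurable (fun x : ℝ => x^i * Real.exp (-(1/2) * x^2)) volume := by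
    apply Continuous.aestronglyMeasurable
    continuity
  have := hint.bdd_mul hmeas (c := 1 + 2^i * i !) (Filter.Eventually.of_forall key)
  apply this.congr
  filter_upwards with x
  rw [show -x^2 = -(1/2)*x^2 + -(1/2)*x^2 by ring, Real.exp_add]
  ring

lemma integrable_poly_gauss (Q : Polynomial ℝ) :
    Integrable (fun x : ℝ => Q.eval x * Real.exp (-x^2)) := by
  have : (fun x : ℝ => Q.eval x * Real.exp (-x^2))
      = fun x => ∑ i ∈ Finset.range (Q.natDegree + 1), Q.coeff i * (x^i * Real.exp (-x^2)) := by
    funext x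
    rw [Polynomial.eval_eq_sum_range, Finset.sum_mul]
    congr 1; funext i; ring
  rw [this]
  exact integrable_finset_sum _ (fun i _ => (integrable_pow_gauss i).const_mul _)

/-- Orthogonality: polynomials of low degree are orthogonal to `PH n` against the gaussian. -/
lemma ortho (n : ℕ) : ∀ Q : Polynomial ℝ, Q.natDegree < n →
    ∫ x : ℝ, Q.eval x * ((PH n).eval x * Real.exp (-x^2)) = 0 := by
  induction n with
  | zero => intro Q hQ; omega
  | succ k ih =>
    intro Q hQ
    have step : ∫ x : ℝ, Q.eval x * ((PH (k+1)).eval x * Real.exp (-x^2))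
        = ∫ x : ℝ, (derivative Q).eval x * ((PH k).eval x * Real.exp (-x^2)) := by
      have hu : ∀ x : ℝ, HasDerivAt (fun y => Q.eval y) ((derivative Q).eval x) x :=
        fun x => Q.hasDerivAt x
      have hv : ∀ x : ℝ, HasDerivAt (fun y => (PH k).eval y * Real.exp (-y^2))
          (-((PH (k+1)).eval x * Real.exp (-x^2))) x := fun x => hasDerivAt_PH_gauss k x
      have h1 : Integrable ((fun y => Q.eval y) * (fun x => -((PH (k+1)).eval x * Real.exp (-x^2)))) := by
        have := integrable_poly_gauss (Q * PH (k+1))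
        apply (this.neg).congr
        filter_upwards with x
        simp [Pi.mul_apply]
        ring
      have h2 : Integrable ((fun y => (derivative Q).eval y) * (fun y => (PH k).eval y * Real.exp (-y^2))) := by
        have := integrable_poly_gauss (derivative Q * PH k)
        apply this.congr
        filter_upwards with x
        simp [Pi.mul_apply]
        ring
      have h3 : Integrable ((fun y => Q.eval y) * (fun y => (PH k).eval y * Real.exp (-y^2))) := by
        have := integrable_poly_gauss (Q * PH k)
        apply this.congr
        filter_upwards with x
        simp [Pi.mul_apply]
        ring
      have key := MeasureTheory.integral_mul_deriv_eq_deriv_mul_of_integrable (fun x _ => hu x) (fun x _ => hv x) h1 h2 h3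
      have h4 : ∫ x : ℝ, Q.eval x * -((PH (k+1)).eval x * Real.exp (-x^2))
          = - ∫ x : ℝ, Q.eval x * ((PH (k+1)).eval x * Real.exp (-x^2)) := by
        rw [← integral_neg]; congr 1; funext x; ring
      rw [h4] at key
      have := neg_injective key
      linarith [this]
    rw [step]
    by_cases hQ0 : derivative Q = 0
    · simp [hQ0]
    · apply ih
      rcases Nat.eq_zero_or_pos Q.natDegree with h0 | hpos
      · exfalso
        have : Q = Polynomial.C (Q.coeff 0) := Polynomial.eq_C_of_natDegree_eq_zero h0
        rw [this] at hQ0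
        simp at hQ0
      · have := Polynomial.natDegree_derivative_lt (p := Q) (by omega)
        omega

lemma hermiteH_eq (n : ℕ) (t : ℝ) : hermiteH n t = (PH n).eval t :=
  hermiteH_eq_PH n t


/-- Coefficients in the Hermite multiplication theorem. -/
noncomputable def Pc (N m : ℕ) (γ : ℝ) : ℝ :=
  if m ≤ N ∧ (N - m) % 2 = 0 then
    (N ! : ℝ) / (m ! * ((N - m)/2)!) * γ^m * (γ^2 - 1)^((N-m)/2) else 0

lemma Pc_eq_zero {N m : ℕ} (γ : ℝ) (h : ¬(m ≤ N ∧ (N - m) % 2 = 0)) : Pc N m γ = 0 :=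
  if_neg h

lemma Pc_eq' {N m j : ℕ} (γ : ℝ) (h : N = m + 2 * j) :
    Pc N m γ = (N ! : ℝ) / (m ! * (j !)) * γ^m * (γ^2 - 1)^j := by
  have h1 : m ≤ N := by omega
  have h2 : (N - m) % 2 = 0 := by omega
  have h3 : (N - m) / 2 = j := by omega
  rw [Pc, if_pos ⟨h1, h2⟩, h3]

lemma Pc_rec (N m : ℕ) (γ : ℝ) (hm : m ≤ N + 2) :
    Pc (N+2) m γ = (if 1 ≤ m then γ * Pc (N+1) (m-1) γ else 0)
      + 2*((m:ℝ)+1)*γ * Pc (N+1) (m+1) γ - 2*((N:ℝ)+1) * Pc N m γ := by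
  rcases Nat.even_or_odd (N + 2 - m) with he | ho
  · -- even case
    obtain ⟨j, hj⟩ : ∃ j, N + 2 = m + 2 * j := by
      obtain ⟨j, hj⟩ := he; exact ⟨j, by omega⟩
    have hLHS := Pc_eq' (N := N+2) (m := m) (j := j) γ hj
    rcases Nat.eq_zero_or_pos j with hj0 | hjpos
    · -- j = 0 : m = N + 2
      subst hj0
      have hmN : m = N + 2 := by omega
      subst hmN
      rw [hLHS]
      rw [if_pos (by omega)]
      have hsub : N + 2 - 1 = N + 1 := by omega
      rw [hsub]
      rw [Pc_eq' (j := 0) γ (by omega), Pc_eq_zero γ (by omega), Pc_eq_zero γ (by omega)]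
      have e2 : ((N+2)! : ℝ) = (N+2) * (N+1)! := by
        push_cast [Nat.factorial_succ]; ring
      have h1 : ((N+1)! : ℝ) ≠ 0 := by positivity
      rw [e2]
      field_simp
      ring
    · obtain ⟨j', rfl⟩ : ∃ j', j = j' + 1 := ⟨j - 1, by omega⟩
      have hmN : m ≤ N := by omega
      have hT2 := Pc_eq' (N := N+1) (m := m+1) (j := j') γ (by omega)
      have hT3 := Pc_eq' (N := N) (m := m) (j := j') γ (by omega)
      have e2 : ((N+2)! : ℝ) = (N+2) * (N+1) * N ! := by
        push_cast [Nat.factorial_succ]; ring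
      have e1 : ((N+1)! : ℝ) = (N+1) * N ! := by
        push_cast [Nat.factorial_succ]; ring
      have ej : ((j'+1)! : ℝ) = (j'+1) * j' ! := by
        push_cast [Nat.factorial_succ]; ring
      have hfN : ((N)! : ℝ) ≠ 0 := by positivity
      have hfj : ((j')! : ℝ) ≠ 0 := by positivity
      rcases Nat.eq_zero_or_pos m with hm0 | hmpos
      · -- m = 0
        subst hm0
        rw [hLHS, hT2, hT3, if_neg (by omega)]
        have hNj : (N:ℝ) = 2*j' := by
          have h' : N = 2 * j' := by omega
          exact_mod_cast congrArg (Nat.cast : ℕ → ℝ) h'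
        rw [e2, e1, ej, pow_succ]
        field_simp
        rw [hNj]
        ring
      · obtain ⟨m', rfl⟩ : ∃ m', m = m' + 1 := ⟨m - 1, by omega⟩
        rw [hLHS, hT2, hT3, if_pos (by omega)]
        have hsub : m' + 1 - 1 = m' := by omega
        rw [hsub]
        have hT1 := Pc_eq' (N := N+1) (m := m') (j := j'+1) γ (by omega)
        rw [hT1]
        have hNj : (N:ℝ) = m' + 2*j' + 1 := by
          have h' : N = m' + 2 * j' + 1 := by omega
          exact_mod_cast congrArg (Nat.cast : ℕ → ℝ) h'
        have em1 : ((m'+1)! : ℝ) = (m'+1) * m' ! := by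
          push_cast [Nat.factorial_succ]; ring
        have em2 : ((m'+2)! : ℝ) = (m'+2) * (m'+1) * m' ! := by
          push_cast [Nat.factorial_succ]; ring
        have hfm : ((m')! : ℝ) ≠ 0 := by positivity
        rw [e2, e1, ej, em1, em2, pow_succ (γ^2-1) j']
        field_simp
        rw [hNj]
        push_cast
        ring
  · -- odd case: everything vanishes
    have ho' : (N + 2 - m) % 2 = 1 := Nat.odd_iff.mp ho
    rw [Pc_eq_zero γ (by omega)]
    rw [Pc_eq_zero (N := N) γ (by omega)]
    rw [Pc_eq_zero (N := N+1) (m := m+1) γ (by omega)]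
    have hif : (if 1 ≤ m then γ * Pc (N+1) (m-1) γ else 0) = 0 := by
      rcases Nat.eq_zero_or_pos m with h0 | hp
      · subst h0; simp
      · rw [if_pos (show 1 ≤ m by omega), Pc_eq_zero γ (by omega)]
        ring
    rw [hif]
    ring

lemma MT (γ : ℝ) (N : ℕ) : ∀ x : ℝ, (PH N).eval (γ*x) = ∑ m ∈ Finset.range (N+1), Pc N m γ * (PH m).eval x := by
  have pair : ∀ K : ℕ, (∀ x : ℝ, (PH K).eval (γ*x) = ∑ m ∈ Finset.range (K+1), Pc K m γ * (PH m).eval x)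
      ∧ (∀ x : ℝ, (PH (K+1)).eval (γ*x) = ∑ m ∈ Finset.range (K+2), Pc (K+1) m γ * (PH m).eval x) := by
    intro K
    induction K with
    | zero =>
      constructor
      · intro x
        simp [PH_zero, Pc_eq' (N := 0) (m := 0) (j := 0) γ rfl]
      · intro x
        rw [Finset.sum_range_succ, Finset.sum_range_one]
        rw [Pc_eq_zero γ (by omega), Pc_eq' (N := 1) (m := 1) (j := 0) γ rfl]
        simp [PH_one, PH_zero]
        ring
    | succ K ih =>
      obtain ⟨h1, h2⟩ := ih
      refine ⟨h2, ?_⟩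
      intro x
      have hL : (PH (K+2)).eval (γ*x)
          = 2*(γ*x) * (PH (K+1)).eval (γ*x) - 2*((K:ℝ)+1) * (PH K).eval (γ*x) := by
        rw [PH_rec]
        simp only [eval_sub, eval_mul, eval_C, eval_X]
        try push_cast
        try ring
      rw [hL, h2 x, h1 x, Finset.mul_sum, Finset.mul_sum]
      have e1 : ∀ m, 2*(γ*x)*(Pc (K+1) m γ * (PH m).eval x)
          = γ*Pc (K+1) m γ * (PH (m+1)).eval x + 2*(m:ℝ)*γ*Pc (K+1) m γ * (PH (m-1)).eval x := by
        intro m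
        have hx := X_mul_PH m x
        calc 2*(γ*x)*(Pc (K+1) m γ * (PH m).eval x)
            = γ*Pc (K+1) m γ*(2*x*(PH m).eval x) := by ring
          _ = γ*Pc (K+1) m γ*((PH (m+1)).eval x + 2*(m:ℝ)*(PH (m-1)).eval x) := by rw [hx]
          _ = _ := by ring
      rw [Finset.sum_congr rfl (fun m _ => e1 m), Finset.sum_add_distrib]
      -- T1 + T2 - T3 = target
      have hT1 : ∑ m ∈ Finset.range (K+2), γ*Pc (K+1) m γ * (PH (m+1)).eval x
          = ∑ m ∈ Finset.range (K+3), (if 1 ≤ m then γ * Pc (K+1) (m-1) γ else 0) * (PH m).eval x := by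
        rw [Finset.sum_range_succ' (fun m => (if 1 ≤ m then γ * Pc (K+1) (m-1) γ else 0) * (PH m).eval x) (K+2)]
        simp
      have hT2 : ∑ m ∈ Finset.range (K+2), 2*(m:ℝ)*γ*Pc (K+1) m γ * (PH (m-1)).eval x
          = ∑ m ∈ Finset.range (K+3), (2*((m:ℝ)+1)*γ * Pc (K+1) (m+1) γ) * (PH m).eval x := by
        rw [Finset.sum_range_succ' (fun m => 2*(m:ℝ)*γ*Pc (K+1) m γ * (PH (m-1)).eval x) (K+1)]
        rw [Finset.sum_range_succ (fun m => (2*((m:ℝ)+1)*γ * Pc (K+1) (m+1) γ) * (PH m).eval x) (K+2)]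
        rw [Finset.sum_range_succ (fun m => (2*((m:ℝ)+1)*γ * Pc (K+1) (m+1) γ) * (PH m).eval x) (K+1)]
        rw [Pc_eq_zero (N := K+1) (m := K+3) γ (by omega), Pc_eq_zero (N := K+1) (m := K+2) γ (by omega)]
        simp only [Nat.cast_zero, zero_mul, mul_zero, add_zero, Nat.add_sub_cancel]
        apply Finset.sum_congr rfl
        intro i _
        push_cast
        ring
      have hT3 : ∑ m ∈ Finset.range (K+1), 2*((K:ℝ)+1) * (Pc K m γ * (PH m).eval x)
          = ∑ m ∈ Finset.range (K+3), (2*((K:ℝ)+1) * Pc K m γ) * (PH m).eval x := by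
        rw [Finset.sum_range_succ (fun m => (2*((K:ℝ)+1) * Pc K m γ) * (PH m).eval x) (K+2)]
        rw [Finset.sum_range_succ (fun m => (2*((K:ℝ)+1) * Pc K m γ) * (PH m).eval x) (K+1)]
        rw [Pc_eq_zero (N := K) (m := K+2) γ (by omega), Pc_eq_zero (N := K) (m := K+1) γ (by omega)]
        simp only [mul_zero, zero_mul, add_zero]
        apply Finset.sum_congr rfl
        intro m _
        ring
      rw [hT1, hT2, hT3, ← Finset.sum_add_distrib, ← Finset.sum_sub_distrib]
      apply Finset.sum_congr rfl
      intro m hmem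
      rw [Finset.mem_range] at hmem
      rw [Pc_rec K m γ (by omega)]
      ring
  exact (pair N).1

theorem stmt17 (σ ρ : ℝ) (hσ : 0 < σ) (hρ : 0 < ρ) (N : ℕ) (hN : 1 ≤ N)
    (j : ℕ) (hj : j < N) :
    ∑ m ∈ Finset.range (N + 1),
        Acoef σ ρ j m * (if m = N then 1 else bcoef σ ρ N m) = 0 := by
  have hbase : (0:ℝ) < 2 + σ/ρ := by positivity
  have h2σ : (0:ℝ) < 2*σ := by positivity
  unfold Acoef
  simp only [hermiteH_eq]
  set c : ℝ := (2 + σ / ρ) ^ (-(1 : ℝ) / 2) with hcdef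
  set lam : ℝ := (2*σ) ^ (-(1:ℝ)/2) with hlamdef
  set γ : ℝ := Real.sqrt (2 + σ/ρ) with hγdef
  have hγc : γ * c = 1 := by
    rw [hγdef, hcdef, Real.sqrt_eq_rpow, ← Real.rpow_add hbase]
    norm_num
  have hcγ : c * γ = 1 := by rw [mul_comm]; exact hγc
  have hγsq : γ^2 = 2 + σ/ρ := Real.sq_sqrt hbase.le
  have hlamsq : lam^2 = (2*σ)⁻¹ := by
    rw [hlamdef, ← Real.rpow_natCast ((2*σ) ^ (-(1:ℝ)/2)) 2, ← Real.rpow_mul h2σ.le]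
    norm_num [Real.rpow_neg_one]
  have hcsq : c^2 = ρ / (2*ρ+σ) := by
    rw [hcdef, ← Real.rpow_natCast ((2 + σ/ρ) ^ (-(1:ℝ)/2)) 2, ← Real.rpow_mul hbase.le]
    norm_num [Real.rpow_neg_one]
    rw [show 2 + σ/ρ = (2*ρ+σ)/ρ by field_simp, inv_div]
  have hr : (ρ+σ)/(2*σ*(2*ρ+σ)) = (lam*c)^2 * (γ^2 - 1) := by
    rw [mul_pow, hlamsq, hcsq, hγsq]
    rw [div_eq_iff (by positivity)]
    field_simp
    ring
  have hpow : ∀ m : ℕ, (2*σ) ^ (-((j:ℝ)+m)/2) = lam^j * lam^m := by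
    intro m
    rw [show (-((j:ℝ)+m)/2) = (-(1:ℝ)/2) * (((j+m : ℕ) : ℝ)) by push_cast; ring]
    rw [Real.rpow_mul h2σ.le, Real.rpow_natCast, pow_add, hlamdef]
  have bridge : ∀ m, m ≤ N →
      ((-1:ℝ)^m * lam^m) * (if m = N then 1 else bcoef σ ρ N m)
        = (-(lam*c))^N * Pc N m γ := by
    intro m hm
    by_cases hmN : m = N
    · subst hmN
      rw [if_pos rfl, Pc_eq' (N := m) (m := m) (j := 0) γ (by omega)]
      have hfm : ((m)! :ℝ) ≠ 0 := by positivity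
      have e : ((m)! : ℝ)/((m)! * (0)!) * γ^m * (γ^2-1)^0 = γ^m := by
        simp only [Nat.factorial_zero, Nat.cast_one, mul_one, pow_zero]
        rw [div_self hfm, one_mul]
      rw [e]
      have h5 : (-(lam*c))^m * γ^m = (-1:ℝ)^m * lam^m := by
        rw [← mul_pow, neg_mul, mul_assoc, hcγ, mul_one, neg_pow]
      rw [h5, mul_one]
    · rw [if_neg hmN]
      have hmN' : m < N := by omega
      rcases Nat.even_or_odd (N - m) with hev | hod
      · obtain ⟨t, ht⟩ := hev
        obtain ⟨j', hj'⟩ : ∃ j', N = m + 2*j' := ⟨t, by omega⟩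
        have hpar : (N-m) % 2 = 0 := by omega
        have hdiv : (N-m)/2 = j' := by omega
        simp only [bcoef]
        rw [if_pos hpar, hdiv, Pc_eq' γ hj', hj']
        rw [pow_add, pow_mul, neg_sq, neg_pow, hr, mul_pow]
        have e2 : (lam*c)^m * γ^m = lam^m := by
          rw [← mul_pow, mul_assoc, hcγ, mul_one]
        rw [← e2]
        ring
      · have hpar : (N-m) % 2 = 1 := Nat.odd_iff.mp hod
        simp only [bcoef]
        rw [if_neg (by omega), Pc_eq_zero γ (by omega)]
        ring
  have hsummand : ∀ m ∈ Finset.range (N+1),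
      c * Real.sqrt (2*ρ) * (-1:ℝ)^(j+m) * (2*σ) ^ (-((j:ℝ)+m)/2)
        * (∫ τ : ℝ, (PH j).eval (c*τ) * (PH m).eval (c*τ) * Real.exp (-τ^2))
        * (if m = N then 1 else bcoef σ ρ N m)
      = (c * Real.sqrt (2*ρ) * (-1:ℝ)^j * lam^j * (-(lam*c))^N)
        * (Pc N m γ * ∫ τ : ℝ, (PH j).eval (c*τ) * (PH m).eval (c*τ) * Real.exp (-τ^2)) := by
    intro m hm
    rw [Finset.mem_range] at hm
    rw [hpow m, pow_add]
    have hb := bridge m (by omega)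
    calc c * Real.sqrt (2*ρ) * ((-1:ℝ)^j * (-1)^m) * (lam^j * lam^m)
        * (∫ τ : ℝ, (PH j).eval (c*τ) * (PH m).eval (c*τ) * Real.exp (-τ^2))
        * (if m = N then 1 else bcoef σ ρ N m)
        = (c * Real.sqrt (2*ρ) * (-1:ℝ)^j * lam^j)
          * (((-1:ℝ)^m * lam^m) * (if m = N then 1 else bcoef σ ρ N m))
          * (∫ τ : ℝ, (PH j).eval (c*τ) * (PH m).eval (c*τ) * Real.exp (-τ^2)) := by ring
      _ = _ := by rw [hb]; ring
  rw [Finset.sum_congr rfl hsummand, ← Finset.mul_sum]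
  have hint : ∀ m : ℕ, Integrable
      (fun τ : ℝ => (PH j).eval (c*τ) * (PH m).eval (c*τ) * Real.exp (-τ^2)) := by
    intro m
    have h := integrable_poly_gauss (((PH j).comp (Polynomial.C c * Polynomial.X))
      * ((PH m).comp (Polynomial.C c * Polynomial.X)))
    apply h.congr
    filter_upwards with x
    simp [Polynomial.eval_comp]
  have hzero : ∑ m ∈ Finset.range (N+1),
      Pc N m γ * ∫ τ : ℝ, (PH j).eval (c*τ) * (PH m).eval (c*τ) * Real.exp (-τ^2) = 0 := by
    have step1 : ∀ m ∈ Finset.range (N+1),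
        Pc N m γ * ∫ τ : ℝ, (PH j).eval (c*τ) * (PH m).eval (c*τ) * Real.exp (-τ^2)
        = ∫ τ : ℝ, Pc N m γ * ((PH j).eval (c*τ) * (PH m).eval (c*τ) * Real.exp (-τ^2)) := by
      intro m _
      rw [MeasureTheory.integral_const_mul]
    rw [Finset.sum_congr rfl step1]
    rw [← MeasureTheory.integral_finset_sum _ (fun m _ => (hint m).const_mul _)]
    have step2 : (fun τ : ℝ => ∑ m ∈ Finset.range (N+1),
        Pc N m γ * ((PH j).eval (c*τ) * (PH m).eval (c*τ) * Real.exp (-τ^2)))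
        = fun τ : ℝ => ((PH j).comp (Polynomial.C c * Polynomial.X)).eval τ
            * ((PH N).eval τ * Real.exp (-τ^2)) := by
      funext τ
      have e3 : ∀ m, Pc N m γ * ((PH j).eval (c*τ) * (PH m).eval (c*τ) * Real.exp (-τ^2))
          = ((PH j).eval (c*τ) * Real.exp (-τ^2)) * (Pc N m γ * (PH m).eval (c*τ)) := by
        intro m; ring
      rw [Finset.sum_congr rfl (fun m _ => e3 m), ← Finset.mul_sum, ← MT γ N (c*τ)]
      rw [show γ * (c*τ) = τ by rw [← mul_assoc, hγc, one_mul]]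
      simp [Polynomial.eval_comp]
      ring
    rw [step2]
    apply ortho
    calc ((PH j).comp (Polynomial.C c * Polynomial.X)).natDegree
        ≤ (PH j).natDegree * (Polynomial.C c * Polynomial.X).natDegree :=
          Polynomial.natDegree_comp_le
      _ ≤ j * 1 := by
          apply Nat.mul_le_mul (natDegree_PH j)
          refine le_trans (Polynomial.natDegree_mul_le) ?_
          simp
      _ < N := by omega
  rw [hzero, mul_zero]
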